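/- Let Ω ⊆ ℝ^{N+1} (with the Euclidean inner product (·,·)_E) be a transitive state space with only finitely many extreme points, whose positive cone V₊ is self-dual with respect to some inner product on ℝ^{N+1}. Then there exists a linear bijection Ξ : ℝ^{N+1} → ℝ^{N+1} such that Ω' := Ξ(Ω) is a transitive state space and its positive cone V₊' is self-dual with respect to the invariant inner product ⟨x, y⟩_{GL(Ω')} := (1/|GL(Ω')|) ∑_{T ∈ GL(Ω')} (T x, T y)_E, i.e. V₊' = {y : ⟨x, y⟩_{GL(Ω')} ≥ 0 for all x ∈ V₊'}. (Here GL(Ω') is a finite group, since a state space with finitely many extreme points has a finite automorphism group.) -/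

import Mathlib

open RealInnerProductSpace

variable {V : Type*} [NormedAddCommGroup V] [InnerProductSpace ℝ V] [FiniteDimensional ℝ V]

/-- A state space: nonempty compact convex set whose affine hull misses `0` and has
dimension `dim V - 1` (so it spans `V`). -/
def IsStateSpace (Ω : Set V) : Prop :=
  Ω.Nonempty ∧ IsCompact Ω ∧ Convex ℝ Ω ∧ (0 : V) ∉ affineSpan ℝ Ω ∧
    Module.finrank ℝ (vectorSpan ℝ Ω) + 1 = Module.finrank ℝ V

/-- The group `GL(Ω)` of linear bijections preserving `Ω`. -/
def autGroup (Ω : Set V) : Set (V ≃ₗ[ℝ] V) := {T | T '' Ω = Ω}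

/-- Transitivity of the action of `GL(Ω)` on the extreme points of `Ω`. -/
def IsTransitive (Ω : Set V) : Prop :=
  ∀ ω₁ ∈ Set.extremePoints ℝ Ω, ∀ ω₂ ∈ Set.extremePoints ℝ Ω,
    ∃ T ∈ autGroup Ω, T ω₁ = ω₂

/-- The inner product of `V` is invariant under `GL(Ω)`. -/
def InvariantInner (Ω : Set V) : Prop :=
  ∀ T ∈ autGroup Ω, ∀ x y : V, ⟪T x, T y⟫ = ⟪x, y⟫

/-- The positive cone generated by `Ω`. -/
def posCone (Ω : Set V) : Set V := {x | ∃ l : ℝ, ∃ ω ∈ Ω, 0 ≤ l ∧ x = l • ω}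

/-- Self-duality of the positive cone with respect to the inner product of `V`. -/
def SelfDualCone (Ω : Set V) : Prop :=
  posCone Ω = {y | ∀ x ∈ posCone Ω, 0 ≤ ⟪x, y⟫}

/-- An effect on `Ω`. -/
def IsEffect (Ω : Set V) (e : V) : Prop := ∀ ω ∈ Ω, 0 ≤ ⟪e, ω⟫ ∧ ⟪e, ω⟫ ≤ 1

/-- A measurement with outcome set `A`: a family of nonzero effects summing to the
unit effect `ωM`. -/
def IsMeasurement (Ω : Set V) (ωM : V) {A : Type*} [Fintype A] (f : A → V) : Prop :=
  (∀ a, f a ≠ 0 ∧ IsEffect Ω (f a)) ∧ ∑ a, f a = ωM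

/-- An ideal measurement. -/
def IsIdeal (Ω : Set V) (ωM : V) {A : Type*} [Fintype A] (f : A → V) : Prop :=
  IsMeasurement Ω ωM f ∧
    ∃ c : ℝ, 0 < c ∧ (∀ ω ∈ Set.extremePoints ℝ Ω, ‖ω‖ = c) ∧
      ∀ a, ∃ S : Finset V, ↑S ⊆ Set.extremePoints ℝ Ω ∧
        (f a = (c ^ 2)⁻¹ • ∑ ω' ∈ S, ω' ∨ f a = ωM - (c ^ 2)⁻¹ • ∑ ω' ∈ S, ω')

/-- First marginal of a joint measurement. -/
def margF {A B : Type*} [Fintype B] (m : A × B → V) : A → V := fun a => ∑ b, m (a, b)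

/-- Second marginal of a joint measurement. -/
def margG {A B : Type*} [Fintype A] (m : A × B → V) : B → V := fun b => ∑ a, m (a, b)

open Classical in
/-- `∑_{a' : d(a',a) ≤ w/2} ⟪f a', ω⟫`. -/
noncomputable def ballSum {A : Type*} [Fintype A] [MetricSpace A]
    (f : A → V) (ω : V) (a : A) (w : ℝ) : ℝ :=
  ∑ a' ∈ Finset.univ.filter (fun x => dist x a ≤ w / 2), ⟪f a', ω⟫

/-- Overall width of the distribution of `f` on `ω` at confidence level `1 - ε`. -/
noncomputable def overallWidth {A : Type*} [Fintype A] [MetricSpace A]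
    (f : A → V) (ω : V) (ε : ℝ) : ℝ :=
  sInf {w : ℝ | 0 < w ∧ ∃ a : A, 1 - ε ≤ ballSum f ω a w}

/-- Error bar width of `ft` relative to `f`. -/
noncomputable def errorBarWidth (Ω : Set V) {A : Type*} [Fintype A] [MetricSpace A]
    (ft f : A → V) (ε : ℝ) : ℝ :=
  sInf {w : ℝ | 0 < w ∧ ∀ a : A, ∀ ω ∈ Ω, ⟪f a, ω⟫ = 1 → 1 - ε ≤ ballSum ft ω a w}

/-- Werner's measure `D_W(ft, f)`. -/
noncomputable def wernerD (Ω : Set V) {A : Type*} [Fintype A] [MetricSpace A]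
    (ft f : A → V) : ℝ :=
  sSup {d : ℝ | ∃ ω ∈ Ω, ∃ h : A → ℝ, (∀ a₁ a₂ : A, |h a₁ - h a₂| ≤ dist a₁ a₂) ∧
    d = |∑ a, h a * (⟪ft a, ω⟫ - ⟪f a, ω⟫)|}

/-- `l∞` distance `D_∞(ft, f)`. -/
noncomputable def dInfty (Ω : Set V) {A : Type*} (ft f : A → V) : ℝ :=
  sSup {d : ℝ | ∃ ω ∈ Ω, ∃ a : A, d = |⟪ft a, ω⟫ - ⟪f a, ω⟫|}

/-- Minimum localization error `LE(ω^F)`. -/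
noncomputable def locError {A : Type*} [Fintype A] [Nonempty A] (f : A → V) (ω : V) : ℝ :=
  1 - Finset.univ.sup' Finset.univ_nonempty (fun a => ⟪f a, ω⟫)

/-! Write `B = ⟪Ξ ·, Ξ ·⟫` for a linear bijection `Ξ`. The positive cone `K` of `Ω' = Ξ Ω` is then
self-dual for the Euclidean inner product, and `G = GL(Ω')` is finite because it acts faithfully on
the finitely many extreme points. The averaged inner product is `⟪x, P y⟫ / |G|` with
`P = ∑_{T ∈ G} T* T`, so the dual of `K` for it is `P⁻¹ K`, which contains `K`. Conversely,
self-duality makes each `T*` a cone automorphism, so the positive operator `T* T` permutes the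
extreme rays of `K`; some power of it fixes every ray, and for a positive operator
`A ^ m ω = λ ^ m ω` forces `A ω = λ ω`. Thus every extreme point is an eigenvector of `P` with a
positive eigenvalue, which gives `K ⊆ P K`, i.e. `P⁻¹ K ⊆ K`.
-/

variable {E : Type*} [NormedAddCommGroup E] [InnerProductSpace ℝ E] {Ω : Set E}

lemma subset_posCone : Ω ⊆ posCone Ω :=
  fun ω hω => ⟨1, ω, hω, zero_le_one, (one_smul ℝ ω).symm⟩

lemma smul_mem_posCone {x : E} (hx : x ∈ posCone Ω) {c : ℝ} (hc : 0 ≤ c) :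
    c • x ∈ posCone Ω := by
  obtain ⟨l, ω, hω, hl, rfl⟩ := hx
  exact ⟨c * l, ω, hω, mul_nonneg hc hl, (mul_smul c l ω).symm⟩

lemma add_mem_posCone (hΩ : Convex ℝ Ω) {x y : E} (hx : x ∈ posCone Ω) (hy : y ∈ posCone Ω) :
    x + y ∈ posCone Ω := by
  obtain ⟨l, ω, hω, hl, rfl⟩ := hx
  obtain ⟨m, σ, hσ, hm, rfl⟩ := hy
  rcases (add_nonneg hl hm).eq_or_lt with h | h
  · obtain ⟨rfl, rfl⟩ : l = 0 ∧ m = 0 := ⟨by linarith, by linarith⟩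
    exact ⟨0, ω, hω, le_rfl, by simp⟩
  · refine ⟨l + m, (l / (l + m)) • ω + (m / (l + m)) • σ,
      hΩ hω hσ (by positivity) (by positivity) (by field_simp), h.le, ?_⟩
    rw [smul_add, smul_smul, smul_smul, mul_div_cancel₀ _ h.ne', mul_div_cancel₀ _ h.ne']

lemma convex_posCone (hΩ : Convex ℝ Ω) : Convex ℝ (posCone Ω) := fun _ hx _ hy _ _ ha hb _ =>
  add_mem_posCone hΩ (smul_mem_posCone hx ha) (smul_mem_posCone hy hb)

lemma posCone_image (Ξ : E ≃ₗ[ℝ] E) : posCone (Ξ '' Ω) = Ξ '' posCone Ω := by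
  ext x
  constructor
  · rintro ⟨l, _, ⟨ω, hω, rfl⟩, hl, rfl⟩
    exact ⟨l • ω, ⟨l, ω, hω, hl, rfl⟩, map_smul Ξ l ω⟩
  · rintro ⟨_, ⟨l, ω, hω, hl, rfl⟩, rfl⟩
    exact ⟨l, Ξ ω, ⟨ω, hω, rfl⟩, hl, map_smul Ξ l ω⟩

lemma image_posCone_of_mem_autGroup {T : E ≃ₗ[ℝ] E} (hT : T ∈ autGroup Ω) :
    T '' posCone Ω = posCone Ω := by
  rw [← posCone_image, hT]

lemma apply_mem_posCone_of_mem_autGroup {T : E ≃ₗ[ℝ] E} (hT : T ∈ autGroup Ω) {x : E}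
    (hx : x ∈ posCone Ω) : T x ∈ posCone Ω :=
  image_posCone_of_mem_autGroup hT ▸ Set.mem_image_of_mem T hx

lemma symm_mem_autGroup {T : E ≃ₗ[ℝ] E} (hT : T ∈ autGroup Ω) : T.symm ∈ autGroup Ω := by
  change T.symm '' Ω = Ω
  conv_lhs => rw [← hT]
  exact T.symm_image_image Ω

lemma SelfDualCone.inner_nonneg (hsd : SelfDualCone Ω) {x y : E} (hx : x ∈ posCone Ω)
    (hy : y ∈ posCone Ω) : 0 ≤ ⟪x, y⟫ :=
  hsd.subset hy x hx

lemma selfDualCone_image_of_inner_eq {B : E →ₗ[ℝ] E →ₗ[ℝ] ℝ}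
    (hsd : posCone Ω = {y | ∀ x ∈ posCone Ω, 0 ≤ B x y}) {Ξ : E ≃ₗ[ℝ] E}
    (hΞ : ∀ x y, ⟪Ξ x, Ξ y⟫ = B x y) : SelfDualCone (Ξ '' Ω) := by
  ext y
  obtain ⟨y, rfl⟩ := Ξ.surjective y
  rw [posCone_image, Ξ.injective.mem_set_image, Set.mem_ofPred_eq, Set.forall_mem_image]
  simp_rw [hΞ]
  exact Set.ext_iff.1 hsd y

lemma IsTransitive.image (htrans : IsTransitive Ω) (Ξ : E ≃ₗ[ℝ] E) :
    IsTransitive (Ξ '' Ω) := by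
  intro _ hω₁ _ hω₂
  rw [← image_extremePoints] at hω₁ hω₂
  obtain ⟨σ₁, hσ₁, rfl⟩ := hω₁
  obtain ⟨σ₂, hσ₂, rfl⟩ := hω₂
  obtain ⟨T, hT, rfl⟩ := htrans σ₁ hσ₁ σ₂ hσ₂
  refine ⟨(Ξ.symm.trans T).trans Ξ, ?_, by simp⟩
  change _ '' _ = _
  rw [Set.image_image]
  simp only [LinearEquiv.trans_apply, LinearEquiv.symm_apply_apply]
  rw [← Set.image_image Ξ T, hT]

lemma IsStateSpace.notMem_vectorSpan (hΩ : IsStateSpace Ω) {ω : E} (hω : ω ∈ Ω) :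
    ω ∉ vectorSpan ℝ Ω := by
  intro h
  apply hΩ.2.2.2.1
  rw [← AffineSubspace.vsub_right_mem_direction_iff_mem (subset_affineSpan ℝ Ω hω),
    direction_affineSpan, vsub_eq_sub, zero_sub]
  exact neg_mem h

lemma IsStateSpace.exists_dual_eq_one (hΩ : IsStateSpace Ω) :
    ∃ u : Module.Dual ℝ E, ∀ ω ∈ Ω, u ω = 1 := by
  obtain ⟨ω₀, hω₀⟩ := hΩ.1
  obtain ⟨f, hf, hker⟩ := Submodule.exists_le_ker_of_notMem (hΩ.notMem_vectorSpan hω₀)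
  refine ⟨(f ω₀)⁻¹ • f, fun ω hω => ?_⟩
  have hdiff : f (ω -ᵥ ω₀) = 0 := hker (vsub_mem_vectorSpan ℝ hω hω₀)
  rw [vsub_eq_sub, map_sub, sub_eq_zero] at hdiff
  rw [LinearMap.smul_apply, hdiff, smul_eq_mul, inv_mul_cancel₀ hf]

lemma IsStateSpace.convexHull_extremePoints (hΩ : IsStateSpace Ω)
    (hext : (Set.extremePoints ℝ Ω).Finite) :
    convexHull ℝ (Set.extremePoints ℝ Ω) = Ω := by
  simpa [(hext.isClosed_convexHull (𝕜 := ℝ)).closure_eq] using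
    closure_convexHull_extremePoints hΩ.2.1 hΩ.2.2.1

lemma IsStateSpace.posCone_subset_image (hΩ : IsStateSpace Ω)
    (hext : (Set.extremePoints ℝ Ω).Finite) {P : E →ₗ[ℝ] E}
    (hP : ∀ ω ∈ Set.extremePoints ℝ Ω, ∃ c : ℝ, 0 < c ∧ P ω = c • ω) :
    posCone Ω ⊆ P '' posCone Ω := by
  have hΩP : Ω ⊆ P '' posCone Ω := by
    refine (hΩ.convexHull_extremePoints hext).symm.subset.trans
      (convexHull_min (fun ω hω => ?_) ((convex_posCone hΩ.2.2.1).linear_image P))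
    obtain ⟨c, hc, hPω⟩ := hP ω hω
    refine ⟨c⁻¹ • ω, smul_mem_posCone (subset_posCone hω.1) (inv_nonneg.2 hc.le), ?_⟩
    rw [map_smul, hPω, smul_smul, inv_mul_cancel₀ hc.ne', one_smul]
  rintro _ ⟨l, σ, hσ, hl, rfl⟩
  obtain ⟨z, hz, rfl⟩ := hΩP hσ
  exact ⟨l • z, smul_mem_posCone hz hl, map_smul P l z⟩

lemma eq_smul_of_add_eq_extremePoint {u : Module.Dual ℝ E} (hu : ∀ ω ∈ Ω, u ω = 1)
    {ω x y : E} (hω : ω ∈ Set.extremePoints ℝ Ω) (hx : x ∈ posCone Ω) (hy : y ∈ posCone Ω)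
    (hxy : x + y = ω) : x = u x • ω := by
  obtain ⟨a, τ₁, hτ₁, ha, rfl⟩ := hx
  obtain ⟨b, τ₂, hτ₂, hb, rfl⟩ := hy
  have hab : a + b = 1 := by
    simpa [hu _ hτ₁, hu _ hτ₂, hu _ hω.1] using congrArg u hxy
  have hux : u (a • τ₁) = a := by simp [hu _ hτ₁]
  rw [hux]
  rcases ha.eq_or_lt with rfl | ha
  · simp
  rcases hb.eq_or_lt with rfl | hb
  · obtain rfl : a = 1 := by linarith
    simpa using hxy
  rw [hω.2 hτ₁ hτ₂ ⟨a, b, ha, hb, hab, hxy⟩]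

lemma exists_pos_smul_extremePoint_of_image_posCone {u : Module.Dual ℝ E}
    (hu : ∀ ω ∈ Ω, u ω = 1) {A : E →ₗ[ℝ] E} (hA : Function.Injective A)
    (hAK : A '' posCone Ω = posCone Ω) {ω : E} (hω : ω ∈ Set.extremePoints ℝ Ω) :
    ∃ c : ℝ, 0 < c ∧ ∃ σ ∈ Set.extremePoints ℝ Ω, A ω = c • σ := by
  obtain ⟨l, σ, hσ, hl, hAω⟩ : A ω ∈ posCone Ω := hAK ▸ ⟨ω, subset_posCone hω.1, rfl⟩
  have hl : 0 < l := by
    refine hl.lt_of_ne fun h => ?_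
    have : ω = 0 := hA (by rw [hAω, ← h, zero_smul, map_zero])
    simpa [this] using hu ω hω.1
  refine ⟨l, hl, σ, mem_extremePoints_iff_left.2 ⟨hσ, fun x₁ hx₁ x₂ hx₂ hseg => ?_⟩, hAω⟩
  obtain ⟨a, b, ha, hb, -, hσx⟩ := hseg
  -- pull the decomposition `l • σ = (l a) x₁ + (l b) x₂` back through `A` to one of `ω`
  obtain ⟨z₁, hz₁, hAz₁⟩ : (l * a) • x₁ ∈ A '' posCone Ω := by
    rw [hAK]; exact smul_mem_posCone (subset_posCone hx₁) (by positivity)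
  obtain ⟨z₂, hz₂, hAz₂⟩ : (l * b) • x₂ ∈ A '' posCone Ω := by
    rw [hAK]; exact smul_mem_posCone (subset_posCone hx₂) (by positivity)
  have hz : z₁ + z₂ = ω := hA (by rw [map_add, hAz₁, hAz₂, hAω, ← hσx]; module)
  have hx₁σ : (l * a) • x₁ = (u z₁ * l) • σ := by
    rw [← hAz₁]
    conv_lhs => rw [eq_smul_of_add_eq_extremePoint hu hω hz₁ hz₂ hz]
    rw [map_smul, hAω, smul_smul]
  have hcoef : l * a = u z₁ * l := by
    simpa [hu _ hx₁, hu _ hσ] using congrArg u hx₁σ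
  rwa [← hcoef, smul_right_inj (by positivity)] at hx₁σ

lemma exists_pow_apply_eq_smul_iterate {M ι : Type*} [AddCommGroup M] [Module ℝ M]
    {A : M →ₗ[ℝ] M} {v : ι → M} {c : ι → ℝ} {f : ι → ι} (hc : ∀ i, 0 < c i)
    (hA : ∀ i, A (v i) = c i • v (f i)) (k : ℕ) (i : ι) :
    ∃ γ : ℝ, 0 < γ ∧ (A ^ k) (v i) = γ • v (f^[k] i) := by
  induction k with
  | zero => exact ⟨1, one_pos, by simp⟩
  | succ k ih =>
    obtain ⟨γ, hγ, hk⟩ := ih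
    refine ⟨γ * c (f^[k] i), mul_pos hγ (hc _), ?_⟩
    rw [pow_succ', Module.End.mul_apply, hk, map_smul, hA, smul_smul,
      Function.iterate_succ_apply']

section FiniteDimensional

variable [FiniteDimensional ℝ E]

lemma SelfDualCone.adjoint_mem_posCone (hsd : SelfDualCone Ω) {T : E ≃ₗ[ℝ] E}
    (hT : T ∈ autGroup Ω) {y : E} (hy : y ∈ posCone Ω) :
    (T : E →ₗ[ℝ] E).adjoint y ∈ posCone Ω := by
  rw [hsd]
  intro x hx
  rw [LinearMap.adjoint_inner_right]
  exact hsd.inner_nonneg (apply_mem_posCone_of_mem_autGroup hT hx) hy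

lemma SelfDualCone.image_adjoint_posCone (hsd : SelfDualCone Ω) {T : E ≃ₗ[ℝ] E}
    (hT : T ∈ autGroup Ω) : (T : E →ₗ[ℝ] E).adjoint '' posCone Ω = posCone Ω := by
  refine subset_antisymm (Set.image_subset_iff.2 fun y hy => hsd.adjoint_mem_posCone hT hy)
    fun y hy => ⟨_, hsd.adjoint_mem_posCone (symm_mem_autGroup hT) hy, ?_⟩
  rw [← LinearMap.comp_apply, ← LinearMap.adjoint_comp]
  simp

lemma IsStateSpace.span_eq_top (hΩ : IsStateSpace Ω) : Submodule.span ℝ Ω = ⊤ := by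
  obtain ⟨ω₀, hω₀⟩ := hΩ.1
  have hle : vectorSpan ℝ Ω ≤ Submodule.span ℝ Ω :=
    Submodule.span_le.2 fun _ ⟨a, ha, b, hb, hab⟩ =>
      hab ▸ sub_mem (Submodule.subset_span ha) (Submodule.subset_span hb)
  have hlt : vectorSpan ℝ Ω < Submodule.span ℝ Ω :=
    hle.lt_of_ne fun h => hΩ.notMem_vectorSpan hω₀ (h ▸ Submodule.subset_span hω₀)
  apply Submodule.eq_top_of_finrank_eq
  have := Submodule.finrank_lt_finrank_of_lt hlt
  have := Submodule.finrank_le (Submodule.span ℝ Ω)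
  have := hΩ.2.2.2.2
  omega

lemma IsStateSpace.span_extremePoints (hΩ : IsStateSpace Ω)
    (hext : (Set.extremePoints ℝ Ω).Finite) :
    Submodule.span ℝ (Set.extremePoints ℝ Ω) = ⊤ := by
  rw [eq_top_iff, ← hΩ.span_eq_top, Submodule.span_le]
  nth_rw 1 [← hΩ.convexHull_extremePoints hext]
  exact convexHull_min Submodule.subset_span (Submodule.convex _)

lemma IsStateSpace.autGroup_finite (hΩ : IsStateSpace Ω) (hext : (Set.extremePoints ℝ Ω).Finite) :
    (autGroup Ω).Finite := by
  have hmaps : ∀ T ∈ autGroup Ω,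
      Set.MapsTo T (Set.extremePoints ℝ Ω) (Set.extremePoints ℝ Ω) := fun T hT x hx => by
    rw [← hT, ← image_extremePoints]
    exact ⟨x, hx, rfl⟩
  have : Finite (Set.extremePoints ℝ Ω) := hext.to_subtype
  rw [← Set.finite_coe_iff]
  refine Finite.of_injective (fun T : autGroup Ω => (hmaps T.1 T.2).restrict) fun T₁ T₂ h => ?_
  refine Subtype.ext (LinearEquiv.toLinearMap_injective
    (LinearMap.ext_on (hΩ.span_extremePoints hext) fun x hx => ?_))
  exact congrArg Subtype.val (congrFun h ⟨x, hx⟩)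

lemma IsStateSpace.image (hΩ : IsStateSpace Ω) (Ξ : E ≃ₗ[ℝ] E) : IsStateSpace (Ξ '' Ω) := by
  obtain ⟨hne, hcomp, hconv, h0, hrank⟩ := hΩ
  have himg : Ξ '' Ω = Ξ.toAffineMap '' Ω := rfl
  refine ⟨hne.image Ξ, hcomp.image Ξ.toLinearMap.continuous_of_finiteDimensional,
    hconv.linear_image Ξ.toLinearMap, ?_, ?_⟩
  · rw [himg, ← AffineSubspace.map_span]
    rintro ⟨y, hy, hy0⟩
    obtain rfl : y = 0 := Ξ.injective (hy0.trans (map_zero Ξ).symm)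
    exact h0 hy
  · rw [himg, ← AffineMap.map_vectorSpan]
    exact (LinearEquiv.finrank_map_eq Ξ _).symm ▸ hrank

lemma LinearMap.IsPositive.pow {A : E →ₗ[ℝ] E} (hA : A.IsPositive) (n : ℕ) :
    (A ^ n).IsPositive := by
  induction n using Nat.twoStepInduction with
  | zero => simp [LinearMap.isPositive_one]
  | one => simpa using hA
  | more n ih _ =>
    have h : A ^ (n + 2) = A.adjoint ∘ₗ (A ^ n) ∘ₗ A := by
      rw [hA.adjoint_eq, pow_succ, pow_succ']
      rfl
    exact h ▸ ih.adjoint_conj A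

lemma LinearMap.IsPositive.apply_eq_smul_of_pow_apply_eq {A : E →ₗ[ℝ] E} (hA : A.IsPositive)
    {m : ℕ} (hm : 0 < m) {lam : ℝ} (hlam : 0 < lam) {x : E}
    (hx : (A ^ m) x = lam ^ m • x) : A x = lam • x := by
  set L : Module.End ℝ E := algebraMap ℝ _ lam
  set Q := ∑ i ∈ Finset.range m, A ^ i * L ^ (m - 1 - i)
  -- `Q (A - lam) = A ^ m - lam ^ m` and `Q ≥ lam ^ (m - 1) > 0`, so `A - lam` kills `x`
  have hQ : Q (A x - lam • x) = 0 := by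
    have := congrArg (· x) ((Algebra.commute_algebraMap_right lam A).geom_sum₂_mul m)
    simpa [Q, L, hx, ← map_pow, Module.algebraMap_end_apply] using this
  have hterm : ∀ i ∈ Finset.range m, ∀ y : E,
      ⟪(A ^ i * L ^ (m - 1 - i)) y, y⟫ = lam ^ (m - 1 - i) * ⟪(A ^ i) y, y⟫ := by
    intro i _ y
    simp [L, ← map_pow, Module.algebraMap_end_apply, real_inner_smul_left]
  by_contra hne
  have hpos : 0 < ⟪Q (A x - lam • x), A x - lam • x⟫ := by
    rw [LinearMap.sum_apply, sum_inner, Finset.sum_congr rfl fun i hi => hterm i hi _]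
    refine Finset.sum_pos' (fun i _ => mul_nonneg (by positivity) ((hA.pow i).inner_nonneg_left _))
      ⟨0, Finset.mem_range.2 hm, mul_pos (by positivity) ?_⟩
    simpa only [pow_zero, Module.End.one_apply] using real_inner_self_pos.2 (sub_ne_zero.2 hne)
  simp [hQ] at hpos

lemma IsStateSpace.exists_apply_eq_smul_of_image_posCone (hΩ : IsStateSpace Ω)
    (hext : (Set.extremePoints ℝ Ω).Finite) {A : E →ₗ[ℝ] E} (hApos : A.IsPositive)
    (hA : Function.Injective A) (hAK : A '' posCone Ω = posCone Ω) {ω : E}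
    (hω : ω ∈ Set.extremePoints ℝ Ω) : ∃ c : ℝ, 0 < c ∧ A ω = c • ω := by
  obtain ⟨u, hu⟩ := hΩ.exists_dual_eq_one
  have : Finite (Set.extremePoints ℝ Ω) := hext.to_subtype
  choose c hc σ hσ hAσ using fun e : Set.extremePoints ℝ Ω =>
    exists_pos_smul_extremePoint_of_image_posCone hu hA hAK e.2
  let f (e : Set.extremePoints ℝ Ω) : Set.extremePoints ℝ Ω := ⟨σ e, hσ e⟩
  have hf : Function.Injective f := by
    intro e₁ e₂ h
    have h₁₂ : c e₂ • e₁.1 = c e₁ • e₂.1 := hA <| by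
      rw [map_smul, map_smul, hAσ, hAσ, show σ e₁ = σ e₂ from congrArg Subtype.val h,
        smul_smul, smul_smul, mul_comm]
    have hc₁₂ : c e₂ = c e₁ := by simpa [hu _ e₁.2.1, hu _ e₂.2.1] using congrArg u h₁₂
    rw [hc₁₂] at h₁₂
    exact Subtype.ext (smul_right_injective E (hc e₁).ne' h₁₂)
  -- `f` permutes the finitely many extreme points, so `ω` is an eigenvector of some `A ^ m`
  obtain ⟨m, hm, hper⟩ := hf.mem_periodicPts ⟨ω, hω⟩
  obtain ⟨γ, hγ, hAm⟩ := exists_pow_apply_eq_smul_iterate (v := Subtype.val) (f := f) hc hAσ m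
    ⟨ω, hω⟩
  rw [hper.eq] at hAm
  refine ⟨γ ^ (m : ℝ)⁻¹, by positivity, hApos.apply_eq_smul_of_pow_apply_eq hm (by positivity) ?_⟩
  rwa [← Real.rpow_natCast, ← Real.rpow_mul hγ.le, inv_mul_cancel₀ (by positivity),
    Real.rpow_one]

lemma exists_linearEquiv_inner_eq (B : E →ₗ[ℝ] E →ₗ[ℝ] ℝ) (hsymm : ∀ x y, B x y = B y x)
    (hpos : ∀ x, x ≠ 0 → 0 < B x x) : ∃ Ξ : E ≃ₗ[ℝ] E, ∀ x y, ⟪Ξ x, Ξ y⟫ = B x y := by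
  obtain ⟨v, hv⟩ := LinearMap.BilinForm.exists_orthogonal_basis (B := B)
    ⟨fun x y => by simpa using hsymm x y⟩
  have hd : ∀ i, 0 < √(B (v i) (v i)) := fun i => Real.sqrt_pos.2 (hpos _ (v.ne_zero i))
  let e := (stdOrthonormalBasis ℝ E).toBasis.unitsSMul fun i => Units.mk0 _ (hd i).ne'
  let Ξ := v.equiv e (Equiv.refl _)
  suffices (innerₗ E).compl₁₂ (Ξ : E →ₗ[ℝ] E) Ξ = B from
    ⟨Ξ, fun x y => LinearMap.congr_fun₂ this x y⟩
  refine LinearMap.ext_basis v v fun i j => ?_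
  simp only [LinearMap.compl₁₂_apply, innerₗ_apply_apply, LinearEquiv.coe_coe, Ξ,
    Module.Basis.equiv_apply, Equiv.refl_apply, e, Module.Basis.unitsSMul_apply, Units.smul_mk0,
    OrthonormalBasis.coe_toBasis, real_inner_smul_left, real_inner_smul_right,
    orthonormal_iff_ite.1 (stdOrthonormalBasis ℝ E).orthonormal]
  by_cases hij : i = j
  · subst hij
    simp [Real.mul_self_sqrt (hpos _ (v.ne_zero i)).le]
  · simp [hij, hv hij]

noncomputable def gramSum (G : Finset (E ≃ₗ[ℝ] E)) : E →ₗ[ℝ] E :=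
  ∑ T ∈ G, (T : E →ₗ[ℝ] E).adjoint ∘ₗ (T : E →ₗ[ℝ] E)

lemma inner_gramSum (G : Finset (E ≃ₗ[ℝ] E)) (x y : E) :
    ⟪x, gramSum G y⟫ = ∑ T ∈ G, ⟪T x, T y⟫ := by
  simp [gramSum, inner_sum, LinearMap.adjoint_inner_right]

lemma gramSum_injective {G : Finset (E ≃ₗ[ℝ] E)} (hG : G.Nonempty) :
    Function.Injective (gramSum G) := by
  rw [← LinearMap.ker_eq_bot, Submodule.eq_bot_iff]
  intro x hx
  obtain ⟨T, hT⟩ := hG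
  have h := inner_gramSum G x x
  rw [LinearMap.mem_ker.1 hx, inner_zero_right, eq_comm,
    Finset.sum_eq_zero_iff_of_nonneg fun _ _ => real_inner_self_nonneg] at h
  exact T.map_eq_zero_iff.1 (inner_self_eq_zero.1 (h T hT))

lemma SelfDualCone.exists_adjoint_comp_self_apply_eq_smul (hsd : SelfDualCone Ω)
    (hΩ : IsStateSpace Ω) (hext : (Set.extremePoints ℝ Ω).Finite) {T : E ≃ₗ[ℝ] E}
    (hT : T ∈ autGroup Ω) {ω : E} (hω : ω ∈ Set.extremePoints ℝ Ω) :
    ∃ c : ℝ, 0 < c ∧ ((T : E →ₗ[ℝ] E).adjoint ∘ₗ (T : E →ₗ[ℝ] E)) ω = c • ω := by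
  have hinj : Function.Injective ((T : E →ₗ[ℝ] E).adjoint ∘ₗ (T : E →ₗ[ℝ] E)) := by
    rw [LinearMap.coe_comp, LinearMap.adjoint_comp_self_injective_iff]
    exact T.injective
  refine hΩ.exists_apply_eq_smul_of_image_posCone hext (LinearMap.isPositive_adjoint_comp_self _)
    hinj ?_ hω
  rw [LinearMap.coe_comp, Set.image_comp, LinearEquiv.coe_coe, image_posCone_of_mem_autGroup hT,
    hsd.image_adjoint_posCone hT]

lemma SelfDualCone.gramSum_apply_extremePoint (hsd : SelfDualCone Ω) (hΩ : IsStateSpace Ω)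
    (hext : (Set.extremePoints ℝ Ω).Finite) {G : Finset (E ≃ₗ[ℝ] E)} (hGΩ : ↑G ⊆ autGroup Ω)
    (hG : G.Nonempty) {ω : E} (hω : ω ∈ Set.extremePoints ℝ Ω) :
    ∃ c : ℝ, 0 < c ∧ gramSum G ω = c • ω := by
  choose! c hc hTc using fun T (hT : T ∈ G) =>
    hsd.exists_adjoint_comp_self_apply_eq_smul hΩ hext (hGΩ hT) hω
  refine ⟨∑ T ∈ G, c T, Finset.sum_pos hc hG, ?_⟩
  rw [gramSum, LinearMap.sum_apply, Finset.sum_smul]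
  exact Finset.sum_congr rfl hTc

theorem SelfDualCone.posCone_eq_setOf_average (hsd : SelfDualCone Ω) (hΩ : IsStateSpace Ω)
    (hext : (Set.extremePoints ℝ Ω).Finite) {G : Finset (E ≃ₗ[ℝ] E)} (hGΩ : ↑G ⊆ autGroup Ω)
    (hG : G.Nonempty) :
    posCone Ω = {y | ∀ x ∈ posCone Ω, 0 ≤ (G.card : ℝ)⁻¹ * ∑ T ∈ G, ⟪T x, T y⟫} := by
  have hcard : (0 : ℝ) < (G.card : ℝ)⁻¹ := by simpa using hG.card_pos
  have hmem (y : E) :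
      (∀ x ∈ posCone Ω, 0 ≤ ∑ T ∈ G, ⟪T x, T y⟫) ↔ gramSum G y ∈ posCone Ω := by
    conv_rhs => rw [hsd]
    simp_rw [Set.mem_ofPred_eq, inner_gramSum]
  ext y
  simp only [Set.mem_ofPred_eq, mul_nonneg_iff_of_pos_left hcard, hmem]
  constructor
  · intro hy
    rw [← hmem]
    exact fun x hx => Finset.sum_nonneg fun T hT => hsd.inner_nonneg
      (apply_mem_posCone_of_mem_autGroup (hGΩ hT) hx)
      (apply_mem_posCone_of_mem_autGroup (hGΩ hT) hy)
  · intro hPy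
    obtain ⟨z, hz, hPz⟩ := hΩ.posCone_subset_image hext
      (fun ω hω => hsd.gramSum_apply_extremePoint hΩ hext hGΩ hG hω) hPy
    rwa [← gramSum_injective hG hPz]

end FiniteDimensional

/-- **Proposition 4 (paper).** A transitive state space with finitely many extreme points
whose positive cone is self-dual with respect to some inner product can be linearly
transformed so as to be self-dual with respect to the `GL(Ω')`-averaged (invariant)
Euclidean inner product. -/
theorem transitive_selfDual_representation
    {N : ℕ} {Ω : Set (EuclideanSpace ℝ (Fin (N + 1)))}
    (hΩ : IsStateSpace Ω) (htrans : IsTransitive Ω)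
    (hfinext : (Set.extremePoints ℝ Ω).Finite)
    (hsd : ∃ B : EuclideanSpace ℝ (Fin (N + 1)) →ₗ[ℝ] EuclideanSpace ℝ (Fin (N + 1)) →ₗ[ℝ] ℝ,
      (∀ x y, B x y = B y x) ∧ (∀ x, x ≠ 0 → 0 < B x x) ∧
      posCone Ω = {y | ∀ x ∈ posCone Ω, 0 ≤ B x y}) :
    ∃ Ξ : EuclideanSpace ℝ (Fin (N + 1)) ≃ₗ[ℝ] EuclideanSpace ℝ (Fin (N + 1)),
      IsStateSpace (Ξ '' Ω) ∧ IsTransitive (Ξ '' Ω) ∧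
      ∃ hfin : (autGroup (Ξ '' Ω)).Finite,
        posCone (Ξ '' Ω) = {y | ∀ x ∈ posCone (Ξ '' Ω),
          0 ≤ (hfin.toFinset.card : ℝ)⁻¹ * ∑ T ∈ hfin.toFinset, ⟪T x, T y⟫} := by
  obtain ⟨B, hBsymm, hBpos, hBsd⟩ := hsd
  obtain ⟨Ξ, hΞ⟩ := exists_linearEquiv_inner_eq B hBsymm hBpos
  have hΩ' := hΩ.image Ξ
  have hext' : (Set.extremePoints ℝ (Ξ '' Ω)).Finite := by
    rw [← image_extremePoints]
    exact hfinext.image Ξ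
  have hfin := hΩ'.autGroup_finite hext'
  refine ⟨Ξ, hΩ', htrans.image Ξ, hfin, ?_⟩
  exact (selfDualCone_image_of_inner_eq hBsd hΞ).posCone_eq_setOf_average hΩ' hext' (by simp)
    ⟨LinearEquiv.refl ℝ _, hfin.mem_toFinset.2 (Set.image_id _)⟩
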